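/- Let B₂(x) be the linear B-spline (hat function on [0,2], B₂(x) = x for 0 ≤ x ≤ 1, B₂(x) = 2−x for 1 ≤ x ≤ 2, 0 otherwise), and for 0 < α < 1 define f_α = B₂ + αB₂(·−1) + B₂(·−2) and f̃_α = B₂ + αB₂(·−1) − B₂(·−2). Then min_{δ∈{−1,1}} ‖f_α − δ f̃_α‖_∞ = 2 and ‖|f_α| − |f̃_α|‖_∞ = 2α/(1+α). -/

import Mathlib

/-- The order-2 B-spline (hat function): `B₂(x) = x` on `[0,1]`, `2−x` on `[1,2]`,
`0` elsewhere; equivalently `B₂(x) = max(1 − |x−1|, 0)`. -/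
noncomputable def B2 (x : ℝ) : ℝ := max (1 - |x - 1|) 0

/-- `f_α = B₂ + α B₂(·−1) + B₂(·−2)`. -/
noncomputable def fα (α : ℝ) (x : ℝ) : ℝ := B2 x + α * B2 (x - 1) + B2 (x - 2)

/-- `f̃_α = B₂ + α B₂(·−1) − B₂(·−2)`. -/
noncomputable def ftα (α : ℝ) (x : ℝ) : ℝ := B2 x + α * B2 (x - 1) - B2 (x - 2)

/-!
The difference `f_α - f̃_α = 2 B₂(· - 2)` and the sum `f_α + f̃_α = 2 (B₂ + α B₂(· - 1))` both
have sup norm `2`, attained at `3` and `1`. For the magnitudes, `||a| - |b|| ≤ min (|a - b|, |a + b|)`,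
and for `x ≥ 2`, where `B₂(x) = 0`, the hats `B₂(· - 1)` and `B₂(· - 2)` sum to at most `1`; so with
`b = B₂(x - 2)` the bound is `2 min (b, α (1 - b)) ≤ 2α/(1+α)`, with equality where `b = α/(1+α)`,
i.e. at `x = 2 + α/(1+α)`, where `f̃_α` vanishes.
-/

lemma ciSup_eq_of_forall_le_of_eq {ι α : Type*} [ConditionallyCompleteLattice α] {f : ι → α}
    {c : α} (hle : ∀ i, f i ≤ c) (i₀ : ι) (h₀ : f i₀ = c) : ⨆ i, f i = c :=
  have : Nonempty ι := ⟨i₀⟩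
  ciSup_eq_of_forall_le_of_forall_lt_exists_gt hle fun _ hw => ⟨i₀, hw.trans_eq h₀.symm⟩

lemma abs_abs_sub_abs_le_min {α : Type*} [AddCommGroup α] [LinearOrder α] [IsOrderedAddMonoid α]
    (a b : α) : |(|a| - |b|)| ≤ min |a - b| |a + b| :=
  le_min (abs_abs_sub_abs_le_abs_sub a b) (by simpa using abs_abs_sub_abs_le_abs_sub a (-b))

lemma B2_nonneg (x : ℝ) : 0 ≤ B2 x := le_max_right _ _

lemma B2_le_one (x : ℝ) : B2 x ≤ 1 := max_le (by linarith [abs_nonneg (x - 1)]) zero_le_one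

lemma B2_of_two_le {x : ℝ} (h : 2 ≤ x) : B2 x = 0 := by
  rw [B2, abs_of_nonneg (by linarith), max_eq_right (by linarith)]

lemma B2_of_nonpos {x : ℝ} (h : x ≤ 0) : B2 x = 0 := by
  rw [B2, abs_of_nonpos (by linarith), max_eq_right (by linarith)]

lemma B2_of_mem_Icc_zero_one {x : ℝ} (h₀ : 0 ≤ x) (h₁ : x ≤ 1) : B2 x = x := by
  rw [B2, abs_of_nonpos (by linarith), max_eq_left (by linarith)]
  ring

lemma B2_of_mem_Icc_one_two {x : ℝ} (h₁ : 1 ≤ x) (h₂ : x ≤ 2) : B2 x = 2 - x := by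
  rw [B2, abs_of_nonneg (by linarith), max_eq_left (by linarith)]
  ring

lemma B2_add_B2_sub_one_le_one (x : ℝ) : B2 x + B2 (x - 1) ≤ 1 := by
  rcases le_total x 1 with h₁ | h₁
  · rw [B2_of_nonpos (by linarith : x - 1 ≤ 0)]
    linarith [B2_le_one x]
  rcases le_total x 2 with h₂ | h₂
  · rw [B2_of_mem_Icc_one_two h₁ h₂, B2_of_mem_Icc_zero_one (by linarith) (by linarith)]
    linarith
  · rw [B2_of_two_le h₂]
    linarith [B2_le_one (x - 1)]

lemma fα_sub_ftα (α x : ℝ) : fα α x - ftα α x = 2 * B2 (x - 2) := by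
  rw [fα, ftα]; ring

lemma fα_add_ftα (α x : ℝ) : fα α x + ftα α x = 2 * (B2 x + α * B2 (x - 1)) := by
  rw [fα, ftα]; ring

lemma iSup_abs_fα_sub_ftα (α : ℝ) : ⨆ x, |fα α x - ftα α x| = 2 := by
  refine ciSup_eq_of_forall_le_of_eq (fun x => ?_) 3 ?_
  · rw [fα_sub_ftα, abs_of_nonneg (by linarith [B2_nonneg (x - 2)])]
    linarith [B2_le_one (x - 2)]
  · norm_num [fα_sub_ftα, B2]

lemma iSup_abs_fα_add_ftα {α : ℝ} (h₀ : 0 ≤ α) (h₁ : α ≤ 1) :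
    ⨆ x, |fα α x + ftα α x| = 2 := by
  refine ciSup_eq_of_forall_le_of_eq (fun x => ?_) 1 ?_
  · have hx := B2_nonneg x
    have hx₁ := B2_nonneg (x - 1)
    rw [fα_add_ftα, abs_of_nonneg (by positivity)]
    nlinarith [B2_add_B2_sub_one_le_one x]
  · norm_num [fα_add_ftα, B2]

lemma abs_abs_fα_sub_abs_ftα_le {α : ℝ} (hα : 0 ≤ α) (x : ℝ) :
    |(|fα α x| - |ftα α x|)| ≤ 2 * α / (1 + α) := by
  have hmin := abs_abs_sub_abs_le_min (fα α x) (ftα α x)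
  rw [fα_sub_ftα, fα_add_ftα] at hmin
  rw [le_div_iff₀ (by linarith)]
  rcases lt_or_ge x 2 with hx | hx
  · rw [B2_of_nonpos (by linarith : x - 2 ≤ 0), mul_zero, abs_zero, min_eq_left (abs_nonneg _)] at hmin
    nlinarith [abs_nonneg (|fα α x| - |ftα α x|)]
  · have hb := B2_nonneg (x - 2)
    have hb₁ := B2_nonneg (x - 1)
    have hsum : B2 (x - 1) + B2 (x - 2) ≤ 1 := by
      have := B2_add_B2_sub_one_le_one (x - 1)
      rwa [sub_sub, one_add_one_eq_two] at this
    rw [B2_of_two_le hx, zero_add, abs_of_nonneg (a := 2 * B2 (x - 2)) (by positivity),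
      abs_of_nonneg (a := 2 * (α * B2 (x - 1))) (by positivity)] at hmin
    -- `min u v ≤ (α u + v) / (1 + α)`, and here `α u + v ≤ 2α`
    have h₁ := hmin.trans (min_le_left _ _)
    have h₂ := hmin.trans (min_le_right _ _)
    nlinarith [mul_le_mul_of_nonneg_left hsum hα]

lemma abs_abs_fα_sub_abs_ftα_at_max {α : ℝ} (hα : 0 ≤ α) :
    |(|fα α (2 + α / (1 + α))| - |ftα α (2 + α / (1 + α))|)| = 2 * α / (1 + α) := by
  have h1α : 0 < 1 + α := by linarith
  set t := α / (1 + α) with ht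
  have ht₀ : 0 ≤ t := by positivity
  have ht₁ : t ≤ 1 := by rw [ht, div_le_one h1α]; linarith
  have hαt : α * (1 - t) = t := by rw [ht]; field_simp; ring
  have e₀ : B2 (2 + t) = 0 := B2_of_two_le (by linarith)
  have e₁ : B2 (2 + t - 1) = 1 - t := by
    rw [B2_of_mem_Icc_one_two (by linarith) (by linarith)]; ring
  have e₂ : B2 (2 + t - 2) = t := by
    rw [B2_of_mem_Icc_zero_one (by linarith) (by linarith)]; ring
  have hft : ftα α (2 + t) = 0 := by rw [ftα, e₀, e₁, e₂, hαt]; ring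
  have hf : fα α (2 + t) = 2 * t := by rw [fα, e₀, e₁, e₂, hαt]; ring
  rw [hft, hf, abs_zero, sub_zero, abs_abs, abs_of_nonneg (by positivity), ht, mul_div_assoc]

/-- for `0 < α < 1`,
`min_{δ∈{−1,1}} ‖f_α − δ f̃_α‖_∞ = 2` and `‖|f_α| − |f̃_α|‖_∞ = 2α/(1+α)`. -/
theorem stmt18 (α : ℝ) (hα : α ∈ Set.Ioo (0 : ℝ) 1) :
    min (⨆ x : ℝ, |fα α x - ftα α x|) (⨆ x : ℝ, |fα α x + ftα α x|) = 2 ∧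
    (⨆ x : ℝ, abs (|fα α x| - |ftα α x|)) = 2 * α / (1 + α) := by
  obtain ⟨h₀, h₁⟩ := hα
  refine ⟨?_, ?_⟩
  · rw [iSup_abs_fα_sub_ftα, iSup_abs_fα_add_ftα h₀.le h₁.le, min_self]
  · exact ciSup_eq_of_forall_le_of_eq (abs_abs_fα_sub_abs_ftα_le h₀.le) _
      (abs_abs_fα_sub_abs_ftα_at_max h₀.le)
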